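/- Suppose K is a nice cone, i.e., K* + E^⊥ is closed for every face E of K. Then the conic system P = {x : Ax ≤_K b} is well-behaved if and only if the set {(A*y, ⟨b, y⟩) : y ∈ K*} ⊆ X × ℝ is closed. -/

import Mathlib

open scoped RealInnerProductSpace Pointwise

noncomputable section

/-- The dual cone of a set `K` in a real inner product space. -/
def dualConeSet {Y : Type*} [NormedAddCommGroup Y] [InnerProductSpace ℝ Y] (K : Set Y) : Set Y :=
  {y | ∀ x ∈ K, 0 ≤ ⟪y, x⟫}

/-- `E` is a face of the cone `C`. -/
def IsFaceOf {Y : Type*} [NormedAddCommGroup Y] [InnerProductSpace ℝ Y]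
    (C E : Set Y) : Prop :=
  E ⊆ C ∧ Convex ℝ E ∧
    ∀ x₁ ∈ C, ∀ x₂ ∈ C, (1 / 2 : ℝ) • (x₁ + x₂) ∈ E → x₁ ∈ E ∧ x₂ ∈ E

/-- The conic system `P = {x | Ax ≤_K b}` is well-behaved. -/
def WellBehavedSystem {X Y : Type*}
    [NormedAddCommGroup X] [InnerProductSpace ℝ X] [FiniteDimensional ℝ X]
    [NormedAddCommGroup Y] [InnerProductSpace ℝ Y] [FiniteDimensional ℝ Y]
    (A : X →ₗ[ℝ] Y) (b : Y) (K : Set Y) : Prop :=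
  ∀ (c : X) (v : ℝ), IsLUB {r : ℝ | ∃ x : X, b - A x ∈ K ∧ r = ⟪c, x⟫} v →
    ∃ y ∈ dualConeSet K, LinearMap.adjoint A y = c ∧ ⟪b, y⟫ = v

/-! The easy direction is weak duality for the homogenized system `A x + β b ∈ K`, combined with
Farkas' lemma for the closed cone `{(A* y, ⟪b, y⟫) : y ∈ K*}`.

For the converse, the image of `K*` under `y ↦ (A* y, ⟪b, y⟫)` is closed as soon as every
`y ∈ K*` in the kernel lies in the lineality space `K^⊥` of `K*`. Otherwise some `z ∈ K*` with
`A* z = 0` and `⟪b, z⟫ = 0` is not orthogonal to `K`, and one passes to the exposed face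
`F = K ∩ z^⊥`. It contains every slack `b - A x`, so the system over `F` is still well-behaved;
niceness gives `F* = K* + F^⊥`, which makes `F` nice and, by well-behavedness, gives `F*` the same
image as `K*`. Since `F` spans a smaller space, induction on `dim (span K)` concludes. -/

namespace PointedCone

section

variable {E F : Type*} [NormedAddCommGroup E] [NormedSpace ℝ E] [FiniteDimensional ℝ E]
  [NormedAddCommGroup F] [NormedSpace ℝ F]

theorem exists_pos_mul_norm_le_of_ker (C : PointedCone ℝ E) (hC : IsClosed (C : Set E))
    (M : E →ₗ[ℝ] F) (hker : ∀ y ∈ C, M y = 0 → y = 0) :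
    ∃ δ > 0, ∀ y ∈ C, δ * ‖y‖ ≤ ‖M y‖ := by
  have hcompact : IsCompact ((C : Set E) ∩ Metric.sphere 0 1) :=
    (isCompact_sphere 0 1).inter_left hC
  obtain ⟨δ, hδ, hbound⟩ := hcompact.exists_forall_le'
    (M.continuous_of_finiteDimensional.norm.continuousOn) (a := 0) fun y hy => by
      have hy0 : y ≠ 0 := ne_zero_of_mem_sphere (by norm_num) ⟨y, hy.2⟩
      exact norm_pos_iff.mpr fun h => hy0 (hker y hy.1 h)
  refine ⟨δ, hδ, fun y hy => ?_⟩
  rcases eq_or_ne y 0 with rfl | hy0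
  · simp
  have hnorm : 0 < ‖y‖ := norm_pos_iff.mpr hy0
  have hunit := hbound (‖y‖⁻¹ • y) ⟨C.smul_mem (inv_nonneg.mpr hnorm.le) hy, by
    simp [norm_smul, hnorm.ne']⟩
  rwa [map_smul, norm_smul, norm_inv, norm_norm, le_inv_mul_iff₀ hnorm, mul_comm] at hunit

theorem isClosed_image_of_ker_eq_zero (C : PointedCone ℝ E) (hC : IsClosed (C : Set E))
    (M : E →ₗ[ℝ] F) (hker : ∀ y ∈ C, M y = 0 → y = 0) : IsClosed (M '' C) := by
  obtain ⟨δ, hδ, hbound⟩ := C.exists_pos_mul_norm_le_of_ker hC M hker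
  refine isClosed_of_closure_subset fun p hp => ?_
  set R := (‖p‖ + 1) / δ
  have hT : IsClosed (M '' (C ∩ Metric.closedBall 0 R)) :=
    (((isCompact_closedBall 0 R).inter_left hC).image
      M.continuous_of_finiteDimensional).isClosed
  refine Set.image_mono Set.inter_subset_left (hT.closure_subset ?_)
  rw [Metric.mem_closure_iff] at hp ⊢
  intro ε hε
  obtain ⟨_, ⟨y, hy, rfl⟩, hdist⟩ := hp (min ε 1) (lt_min hε one_pos)
  refine ⟨M y, ⟨y, ⟨hy, ?_⟩, rfl⟩, hdist.trans_le (min_le_left _ _)⟩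
  have hMy : ‖M y‖ ≤ ‖p‖ + 1 := by
    have hdist' : ‖M y - p‖ < 1 := dist_eq_norm' p (M y) ▸ hdist.trans_le (min_le_right _ _)
    linarith [norm_le_norm_add_norm_sub' (M y) p]
  rw [mem_closedBall_zero_iff, le_div_iff₀ hδ]
  linarith [hbound y hy]

end

section

variable {E F : Type*} [NormedAddCommGroup E] [InnerProductSpace ℝ E] [FiniteDimensional ℝ E]
  [NormedAddCommGroup F] [NormedSpace ℝ F]

theorem isClosed_image_of_ker_le_lineal (C : PointedCone ℝ E) (hC : IsClosed (C : Set E))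
    (M : E →ₗ[ℝ] F) (hker : ∀ y ∈ C, M y = 0 → y ∈ C.lineal) : IsClosed (M '' C) := by
  set V : Submodule ℝ E := C.lineal ⊓ LinearMap.ker M
  set C' : PointedCone ℝ E := C ⊓ Vᗮ
  have himage : M '' C = M '' C' := by
    refine (Set.image_mono inf_le_left).antisymm' ?_
    rintro _ ⟨y, hy, rfl⟩
    have hPy : V.starProjection y ∈ V := V.starProjection_apply_mem y
    refine ⟨y - V.starProjection y, ⟨?_, V.sub_starProjection_mem_orthogonal y⟩, ?_⟩
    · rw [sub_eq_add_neg]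
      exact C.add_mem hy (mem_lineal.mp hPy.1).2
    · rw [map_sub, LinearMap.mem_ker.mp hPy.2, sub_zero]
  rw [himage]
  refine C'.isClosed_image_of_ker_eq_zero (hC.inter Vᗮ.closed_of_finiteDimensional) M
    fun y hy hMy => ?_
  have hyV : y ∈ V := ⟨hker y hy.1 hMy, hMy⟩
  exact (Submodule.mem_bot ℝ).mp (V.inf_orthogonal_eq_bot ▸ ⟨hyV, hy.2⟩)

end

end PointedCone

def ProperCone.ofSet {E : Type*} [AddCommGroup E] [Module ℝ E] [TopologicalSpace E]
    (K : Set E) (hKclosed : IsClosed K) (hKconv : Convex ℝ K)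
    (hKcone : ∀ t : ℝ, 0 ≤ t → ∀ x ∈ K, t • x ∈ K) (hne : K.Nonempty) : ProperCone ℝ E where
  carrier := K
  add_mem' {x y} hx hy := by
    simpa [← smul_add, smul_smul] using
      hKcone 2 zero_le_two _ (hKconv hx hy (by norm_num) (by norm_num) (add_halves 1))
  zero_mem' := by
    obtain ⟨x, hx⟩ := hne
    simpa using hKcone 0 le_rfl x hx
  smul_mem' c x hx := hKcone c c.2 x hx
  isClosed' := hKclosed

open ProperCone

section Faces

variable {Y : Type*} [NormedAddCommGroup Y] [InnerProductSpace ℝ Y]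

theorem IsFaceOf.trans {K F E : Set Y} (hF : IsFaceOf K F) (hE : IsFaceOf F E) :
    IsFaceOf K E :=
  ⟨hE.1.trans hF.1, hE.2.1, fun x₁ hx₁ x₂ hx₂ hx =>
    have hx' := hF.2.2 x₁ hx₁ x₂ hx₂ (hE.1 hx)
    hE.2.2 x₁ hx'.1 x₂ hx'.2 hx⟩

def IsNiceCone (K : Set Y) : Prop :=
  ∀ E : Set Y, IsFaceOf K E → IsClosed (dualConeSet K + {y : Y | ∀ e ∈ E, ⟪y, e⟫ = 0})

theorem IsNiceCone.of_isFaceOf {K F : Set Y} (hK : IsNiceCone K) (hF : IsFaceOf K F)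
    (hdual : dualConeSet F = dualConeSet K + {y : Y | ∀ e ∈ F, ⟪y, e⟫ = 0}) :
    IsNiceCone F := by
  intro E hE
  have horth : {y : Y | ∀ e ∈ F, ⟪y, e⟫ = 0} + {y : Y | ∀ e ∈ E, ⟪y, e⟫ = 0} =
      {y : Y | ∀ e ∈ E, ⟪y, e⟫ = 0} := by
    refine subset_antisymm ?_ fun w hw => ⟨0, fun e _ => inner_zero_left e, w, hw, zero_add w⟩
    rintro _ ⟨u, hu, w, hw, rfl⟩ e he
    rw [inner_add_left, hu e (hE.1 he), hw e he, add_zero]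
  rw [hdual, add_assoc, horth]
  exact hK E (hF.trans hE)

end Faces

section Cones

variable {Y : Type*} [NormedAddCommGroup Y] [InnerProductSpace ℝ Y] [CompleteSpace Y]

theorem dualConeSet_eq_innerDual (s : Set Y) : dualConeSet s = innerDual s := by
  ext y
  simp [dualConeSet, real_inner_comm]

def ProperCone.exposedFace (K : ProperCone ℝ Y) (z : Y) : ProperCone ℝ Y :=
  K ⊓ innerDual {z, -z}

theorem ProperCone.mem_exposedFace {K : ProperCone ℝ Y} {z x : Y} :
    x ∈ K.exposedFace z ↔ x ∈ K ∧ ⟪z, x⟫ = 0 := by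
  simp [exposedFace, ClosedSubmodule.mem_inf, le_antisymm_iff, and_comm]

theorem ProperCone.isFaceOf_exposedFace {K : ProperCone ℝ Y} {z : Y} (hz : z ∈ innerDual K) :
    IsFaceOf K (K.exposedFace z : Set Y) := by
  refine ⟨fun x hx => (mem_exposedFace.mp hx).1, (K.exposedFace z).convex, ?_⟩
  intro x₁ hx₁ x₂ hx₂ hx
  have h₁ : 0 ≤ ⟪z, x₁⟫ := real_inner_comm z x₁ ▸ hz hx₁
  have h₂ : 0 ≤ ⟪z, x₂⟫ := real_inner_comm z x₂ ▸ hz hx₂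
  have hsum := (mem_exposedFace.mp hx).2
  rw [real_inner_smul_right, inner_add_right] at hsum
  exact ⟨mem_exposedFace.mpr ⟨hx₁, by linarith⟩, mem_exposedFace.mpr ⟨hx₂, by linarith⟩⟩

/-- `K ∩ z^⊥` is the dual of `K* + ℝ z`, so by the bipolar theorem its dual is the closure. -/
theorem ProperCone.innerDual_exposedFace_subset (K : ProperCone ℝ Y) (z : Y) :
    (innerDual (K.exposedFace z : Set Y) : Set Y) ⊆
      closure (innerDual (K : Set Y) + Submodule.span ℝ {z} : Set Y) := by
  set G : ProperCone ℝ Y := Submodule.closure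
    ((innerDual (K : Set Y) : PointedCone ℝ Y) ⊔ PointedCone.ofSubmodule (Submodule.span ℝ {z}))
  have hG : (G : Set Y) = closure (innerDual (K : Set Y) + Submodule.span ℝ {z} : Set Y) :=
    congrArg closure (Submodule.coe_sup _ _)
  rw [← hG, ← innerDual_innerDual G]
  refine innerDual_le_innerDual fun x hx => mem_exposedFace.mpr ⟨?_, ?_⟩
  · rw [← innerDual_innerDual K]
    exact fun y hy => hx (subset_closure (Submodule.mem_sup_left hy))
  · have hzG : ∀ t : ℝ, t • z ∈ G := fun t => subset_closure
      (Submodule.mem_sup_right (Submodule.smul_mem _ t (Submodule.mem_span_singleton_self z)))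
    have h₁ : 0 ≤ ⟪z, x⟫ := by simpa using hx (hzG 1)
    have h₂ : 0 ≤ ⟪-z, x⟫ := by simpa using hx (hzG (-1))
    rw [inner_neg_left] at h₂
    linarith

theorem ProperCone.dualConeSet_exposedFace {K : ProperCone ℝ Y} {z : Y}
    (hz : z ∈ innerDual (K : Set Y)) (hK : IsNiceCone (K : Set Y)) :
    dualConeSet (K.exposedFace z : Set Y) =
      dualConeSet K + {y : Y | ∀ e ∈ (K.exposedFace z : Set Y), ⟪y, e⟫ = 0} := by
  refine subset_antisymm ?_ ?_
  · have hspan : (Submodule.span ℝ {z} : Set Y) ⊆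
        {y : Y | ∀ e ∈ (K.exposedFace z : Set Y), ⟪y, e⟫ = 0} := by
      intro y hy e he
      obtain ⟨t, rfl⟩ := Submodule.mem_span_singleton.mp hy
      rw [real_inner_smul_left, (mem_exposedFace.mp he).2, mul_zero]
    rw [← (hK _ (isFaceOf_exposedFace hz)).closure_eq, dualConeSet_eq_innerDual,
      dualConeSet_eq_innerDual]
    exact (K.innerDual_exposedFace_subset z).trans
      (closure_mono (Set.add_subset_add subset_rfl hspan))
  · rintro _ ⟨k, hk, w, hw, rfl⟩ x hx
    rw [inner_add_left, hw x hx, add_zero]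
    exact hk x (mem_exposedFace.mp hx).1

end Cones

section System

variable {X Y : Type*}
  [NormedAddCommGroup X] [InnerProductSpace ℝ X] [FiniteDimensional ℝ X]
  [NormedAddCommGroup Y] [InnerProductSpace ℝ Y] [FiniteDimensional ℝ Y]
  (A : X →ₗ[ℝ] Y) (b : Y)

def dualDataMap : Y →ₗ[ℝ] X × ℝ := (LinearMap.adjoint A).prod (innerₗ Y b)

@[simp]
theorem dualDataMap_apply (y : Y) : dualDataMap A b y = (LinearMap.adjoint A y, ⟪b, y⟫) := rfl

theorem setOf_eq_image_dualDataMap (s : Set Y) :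
    {p : X × ℝ | ∃ y ∈ s, p = (LinearMap.adjoint A y, ⟪b, y⟫)} = dualDataMap A b '' s := by
  ext p
  simp [eq_comm]

variable {A b}

theorem inner_slack_eq_zero_of_dualDataMap_eq_zero {z : Y} (hz : dualDataMap A b z = 0)
    (x : X) : ⟪z, b - A x⟫ = 0 := by
  simp only [dualDataMap_apply, Prod.mk_eq_zero] at hz
  rw [inner_sub_right, ← LinearMap.adjoint_inner_left, hz.1, inner_zero_left, real_inner_comm,
    hz.2, sub_zero]

theorem WellBehavedSystem.of_subset {K F : Set Y} (h : WellBehavedSystem A b K) (hFK : F ⊆ K)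
    (hslack : ∀ x, b - A x ∈ K → b - A x ∈ F) : WellBehavedSystem A b F := by
  intro c v hv
  have hfeas : {r : ℝ | ∃ x : X, b - A x ∈ F ∧ r = ⟪c, x⟫} =
      {r : ℝ | ∃ x : X, b - A x ∈ K ∧ r = ⟪c, x⟫} := by
    ext r
    constructor <;> rintro ⟨x, hx, rfl⟩
    exacts [⟨x, hFK hx, rfl⟩, ⟨x, hslack x hx, rfl⟩]
  obtain ⟨y, hy, hyc, hyv⟩ := h c v (hfeas ▸ hv)
  exact ⟨y, fun x hx => hy x (hFK hx), hyc, hyv⟩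

/-- Against an objective orthogonal to all slacks, `⟪A* w, x⟫ = ⟪b, w⟫` on the whole feasible
set, so the value is attained and well-behavedness supplies a dual certificate. -/
theorem WellBehavedSystem.exists_dualDataMap_eq {K : Set Y} (h : WellBehavedSystem A b K)
    (hP : ∃ x : X, b - A x ∈ K) {w : Y} (hw : ∀ x, b - A x ∈ K → ⟪w, b - A x⟫ = 0) :
    ∃ ρ ∈ dualConeSet K, dualDataMap A b ρ = dualDataMap A b w := by
  have hconst : ∀ x, b - A x ∈ K → ⟪LinearMap.adjoint A w, x⟫ = ⟪b, w⟫ := fun x hx => by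
    have hslack := hw x hx
    rw [inner_sub_right] at hslack
    rw [LinearMap.adjoint_inner_left, real_inner_comm w b]
    linarith
  have hvalues : {r : ℝ | ∃ x : X, b - A x ∈ K ∧ r = ⟪LinearMap.adjoint A w, x⟫} = {⟪b, w⟫} := by
    obtain ⟨x₀, hx₀⟩ := hP
    refine Set.eq_singleton_iff_unique_mem.mpr ⟨⟨x₀, hx₀, (hconst x₀ hx₀).symm⟩, ?_⟩
    rintro _ ⟨x, hx, rfl⟩
    exact hconst x hx
  obtain ⟨ρ, hρ, hρc, hρv⟩ := h _ _ (hvalues ▸ isLUB_singleton)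
  exact ⟨ρ, hρ, by rw [dualDataMap_apply, dualDataMap_apply, hρc, hρv]⟩

theorem WellBehavedSystem.image_dualDataMap_eq {K F : Set Y} (h : WellBehavedSystem A b K)
    (hP : ∃ x : X, b - A x ∈ K) (hslack : ∀ x, b - A x ∈ K → b - A x ∈ F)
    (hdual : dualConeSet F = dualConeSet K + {y : Y | ∀ e ∈ F, ⟪y, e⟫ = 0}) :
    dualDataMap A b '' dualConeSet F = dualDataMap A b '' dualConeSet K := by
  refine subset_antisymm ?_ (Set.image_mono fun y hy => hdual ▸ ⟨y, hy, 0, fun e _ =>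
    inner_zero_left e, add_zero y⟩)
  rintro _ ⟨_, hy, rfl⟩
  rw [hdual] at hy
  obtain ⟨k, hk, w, hw, rfl⟩ := hy
  obtain ⟨ρ, hρ, hρw⟩ := h.exists_dualDataMap_eq hP fun x hx => hw _ (hslack x hx)
  refine ⟨k + ρ, ?_, by rw [map_add, map_add, hρw]⟩
  rw [dualConeSet_eq_innerDual] at hk hρ ⊢
  exact (innerDual K).add_mem hk hρ

theorem finrank_span_lt_of_inner_ne_zero {K F : Set Y} (hFK : F ⊆ K) {z : Y}
    (hF : ∀ x ∈ F, ⟪z, x⟫ = 0) {k : Y} (hk : k ∈ K) (hzk : ⟪z, k⟫ ≠ 0) :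
    Module.finrank ℝ (Submodule.span ℝ F) < Module.finrank ℝ (Submodule.span ℝ K) := by
  have hker : Submodule.span ℝ F ≤ LinearMap.ker (innerₗ Y z) :=
    Submodule.span_le.mpr fun x hx => hF x hx
  exact Submodule.finrank_lt_finrank_of_lt (SetLike.lt_iff_le_and_exists.mpr
    ⟨Submodule.span_mono hFK, k, Submodule.subset_span hk, fun hk' => hzk (hker hk')⟩)

end System

section Values

variable {X Y : Type*} [NormedAddCommGroup X] [InnerProductSpace ℝ X]
  [AddCommGroup Y] [Module ℝ Y] {A : X →ₗ[ℝ] Y} {b : Y}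

theorem inner_nonpos_of_neg_map_mem {K : PointedCone ℝ Y} {c : X} {v : ℝ}
    (hv : v ∈ upperBounds {r : ℝ | ∃ x : X, b - A x ∈ K ∧ r = ⟪c, x⟫}) {x d : X}
    (hx : b - A x ∈ K) (hd : -A d ∈ K) : ⟪c, d⟫ ≤ 0 := by
  by_contra! hcd
  have hxv : ⟪c, x⟫ ≤ v := hv ⟨x, hx, rfl⟩
  set t := (v - ⟪c, x⟫ + 1) / ⟪c, d⟫
  have ht : 0 ≤ t := div_nonneg (by linarith) hcd.le
  have hfeas : b - A (x + t • d) ∈ K := by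
    have hslack : b - A (x + t • d) = (b - A x) + t • -A d := by
      rw [map_add, map_smul]
      module
    exact hslack ▸ K.add_mem hx (K.smul_mem ht hd)
  have hle := hv ⟨_, hfeas, rfl⟩
  rw [inner_add_right, real_inner_smul_right, div_mul_cancel₀ _ hcd.ne'] at hle
  linarith

theorem nonneg_inner_add_mul_of_isLUB {K : PointedCone ℝ Y} {c : X} {v : ℝ}
    (hv : IsLUB {r : ℝ | ∃ x : X, b - A x ∈ K ∧ r = ⟪c, x⟫} v) {x : X} {β : ℝ}
    (h : A x + β • b ∈ K) : 0 ≤ ⟪c, x⟫ + β * v := by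
  rcases lt_or_ge 0 β with hβ | hβ
  · have hfeas : b - A (-β⁻¹ • x) ∈ K := by
      have hslack : b - A (-β⁻¹ • x) = β⁻¹ • (A x + β • b) := by
        rw [map_smul, smul_add, smul_smul, inv_mul_cancel₀ hβ.ne', one_smul, neg_smul,
          sub_neg_eq_add, add_comm]
      exact hslack ▸ K.smul_mem (inv_nonneg.mpr hβ.le) h
    have hle := hv.1 ⟨_, hfeas, rfl⟩
    rw [real_inner_smul_right, neg_mul, neg_le, inv_mul_eq_div, le_div_iff₀ hβ, neg_mul,
      mul_comm] at hle
    linarith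
  · have hbound : ∀ r ∈ {r : ℝ | ∃ x : X, b - A x ∈ K ∧ r = ⟪c, x⟫}, -β * r ≤ ⟪c, x⟫ := by
      rintro _ ⟨x', hx', rfl⟩
      have hrec : -A ((-β) • x' - x) ∈ K := by
        have hdir : -A ((-β) • x' - x) = (A x + β • b) + (-β) • (b - A x') := by
          rw [map_sub, map_smul]
          module
        exact hdir ▸ K.add_mem h (K.smul_mem (neg_nonneg.mpr hβ) hx')
      have hle := inner_nonpos_of_neg_map_mem hv.1 hx' hrec
      rw [inner_sub_right, real_inner_smul_right] at hle
      linarith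
    have hclosed : IsClosed {r : ℝ | -β * r ≤ ⟪c, x⟫} :=
      isClosed_le (continuous_const.mul continuous_id) continuous_const
    have hle : -β * v ≤ ⟪c, x⟫ :=
      hclosed.closure_subset_iff.mpr hbound (hv.mem_closure hv.nonempty)
    linarith

end Values

section Duality

variable {X Y : Type*}
  [NormedAddCommGroup X] [InnerProductSpace ℝ X] [FiniteDimensional ℝ X]
  [NormedAddCommGroup Y] [InnerProductSpace ℝ Y] [FiniteDimensional ℝ Y]
  {A : X →ₗ[ℝ] Y} {b : Y}

theorem WellBehavedSystem.isClosed_image_dualDataMap (K : ProperCone ℝ Y)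
    (hP : ∃ x : X, b - A x ∈ K) (hK : IsNiceCone (K : Set Y))
    (h : WellBehavedSystem A b K) : IsClosed (dualDataMap A b '' dualConeSet K) := by
  induction hn : Module.finrank ℝ (Submodule.span ℝ (K : Set Y))
    using Nat.strong_induction_on generalizing K with
  | _ n ih =>
  by_cases hlin : ∀ y ∈ innerDual (K : Set Y), dualDataMap A b y = 0 →
      y ∈ (innerDual (K : Set Y) : PointedCone ℝ Y).lineal
  · rw [dualConeSet_eq_innerDual]
    exact PointedCone.isClosed_image_of_ker_le_lineal _ (innerDual _).isClosed _ hlin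
  push Not at hlin
  obtain ⟨z, hz, hMz, hzlin⟩ := hlin
  obtain ⟨k, hk, hzk⟩ : ∃ k ∈ K, ⟪z, k⟫ ≠ 0 := by
    by_contra! h0
    exact hzlin ⟨hz, fun k hk => by simp [real_inner_comm, h0 k hk]⟩
  have hslack : ∀ x, b - A x ∈ K → b - A x ∈ K.exposedFace z := fun x hx =>
    mem_exposedFace.mpr ⟨hx, inner_slack_eq_zero_of_dualDataMap_eq_zero hMz x⟩
  have hFK : (K.exposedFace z : Set Y) ⊆ K := fun x hx => (mem_exposedFace.mp hx).1
  have hdual := dualConeSet_exposedFace hz hK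
  rw [← h.image_dualDataMap_eq hP hslack hdual]
  exact ih _ (hn ▸ finrank_span_lt_of_inner_ne_zero hFK (fun x hx => (mem_exposedFace.mp hx).2)
    hk hzk) _ (hP.imp hslack) (hK.of_isFaceOf (isFaceOf_exposedFace hz) hdual)
    (h.of_subset hFK hslack) rfl

theorem exists_add_smul_mem_of_notMem_image_dualDataMap (K : ProperCone ℝ Y)
    (hS : IsClosed (dualDataMap A b '' innerDual (K : Set Y))) {c : X} {v : ℝ}
    (hcv : (c, v) ∉ dualDataMap A b '' innerDual (K : Set Y)) :
    ∃ (x : X) (β : ℝ), A x + β • b ∈ K ∧ ⟪c, x⟫ + β * v < 0 := by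
  let S : ProperCone ℝ (X × ℝ) :=
    { toSubmodule := (innerDual (K : Set Y) : PointedCone ℝ Y).map (dualDataMap A b)
      isClosed' := hS }
  obtain ⟨f, hfS, hfcv⟩ := S.hyperplane_separation_point hcv
  set x := (InnerProductSpace.toDual ℝ X).symm (f.comp (ContinuousLinearMap.inl ℝ X ℝ))
  have hf : ∀ q s, f (q, s) = ⟪x, q⟫ + s * f (0, 1) := fun q s => by
    rw [InnerProductSpace.toDual_symm_apply, ContinuousLinearMap.comp_apply,
      ContinuousLinearMap.inl_apply, ← smul_eq_mul, ← map_smul, ← map_add]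
    congr 1
    ext <;> simp
  refine ⟨x, f (0, 1), ?_, by rwa [hf, real_inner_comm, mul_comm] at hfcv⟩
  rw [← innerDual_innerDual K]
  intro y hy
  have hfy : 0 ≤ f (dualDataMap A b y) := hfS _ ⟨y, hy, rfl⟩
  show 0 ≤ ⟪y, A x + f (0, 1) • b⟫
  rw [dualDataMap_apply, hf, real_inner_comm, LinearMap.adjoint_inner_left] at hfy
  rwa [inner_add_right, real_inner_smul_right, real_inner_comm b y, mul_comm]

theorem wellBehavedSystem_of_isClosed_image_dualDataMap (K : ProperCone ℝ Y)
    (hS : IsClosed (dualDataMap A b '' dualConeSet K)) : WellBehavedSystem A b K := by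
  intro c v hv
  rw [dualConeSet_eq_innerDual] at hS ⊢
  suffices hcv : (c, v) ∈ dualDataMap A b '' innerDual (K : Set Y) by
    obtain ⟨y, hy, hyp⟩ := hcv
    exact ⟨y, hy, congrArg Prod.fst hyp, congrArg Prod.snd hyp⟩
  by_contra hcv
  obtain ⟨x, β, h, hlt⟩ := exists_add_smul_mem_of_notMem_image_dualDataMap K hS hcv
  exact hlt.not_ge (nonneg_inner_add_mul_of_isLUB (A := A) (K := K) hv h)

end Duality

/-- if `K` is a nice cone (`K* + E^⊥` is closed for every face `E` of `K`), then
`P` is well-behaved iff `{(A*y, ⟨b,y⟩) : y ∈ K*}` is closed. -/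
theorem wellBehaved_iff_closed_of_nice
    {X Y : Type*}
    [NormedAddCommGroup X] [InnerProductSpace ℝ X] [FiniteDimensional ℝ X]
    [NormedAddCommGroup Y] [InnerProductSpace ℝ Y] [FiniteDimensional ℝ Y]
    (A : X →ₗ[ℝ] Y) (b : Y) (K : Set Y)
    (hKclosed : IsClosed K) (hKconv : Convex ℝ K)
    (hKcone : ∀ (t : ℝ), 0 ≤ t → ∀ x ∈ K, t • x ∈ K)
    (hP : ∃ x : X, b - A x ∈ K)
    (hnice : ∀ E : Set Y, IsFaceOf K E →
      IsClosed (dualConeSet K + {y : Y | ∀ e ∈ E, ⟪y, e⟫ = 0})) :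
    WellBehavedSystem A b K ↔
      IsClosed {p : X × ℝ | ∃ y ∈ dualConeSet K,
        p = (LinearMap.adjoint A y, ⟪b, y⟫)} := by
  let C := ProperCone.ofSet K hKclosed hKconv hKcone (let ⟨_, hx⟩ := hP; ⟨_, hx⟩)
  rw [setOf_eq_image_dualDataMap]
  exact ⟨WellBehavedSystem.isClosed_image_dualDataMap C hP hnice,
    wellBehavedSystem_of_isClosed_image_dualDataMap C⟩
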